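/- arXiv:1205.3816 — 2 statements merged into one kernel-verified Lean document; each statement's English description precedes it below -/
import Mathlib

section
/- Let G be a factor-critical finite simple graph and G' a nice factor-critical subgraph of G, i.e., G' is factor-critical and G − V(G') has a perfect matching. Then the contraction G/G', the simple graph obtained from G by identifying all vertices of G' to a single vertex and deleting the resulting loops and parallel edges, is factor-critical. -/
open SimpleGraph

variable {V : Type*}

/-- A set of edges is pairwise vertex-disjoint. -/
def DisjointEdges (N : Set (Sym2 V)) : Prop :=
  ∀ e ∈ N, ∀ f ∈ N, e ≠ f → ∀ x : V, x ∈ e → x ∉ f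

/-- `M` is a matching of `G`: a set of pairwise vertex-disjoint edges of `G`. -/
def IsMatchingSet (G : SimpleGraph V) (M : Set (Sym2 V)) : Prop :=
  M ⊆ G.edgeSet ∧ DisjointEdges M

/-- `M` is a perfect matching of `G`: a matching covering every vertex. -/
def IsPerfectMatchingSet (G : SimpleGraph V) (M : Set (Sym2 V)) : Prop :=
  IsMatchingSet G M ∧ ∀ v : V, ∃ e ∈ M, v ∈ e

/-- `M` is a near-perfect matching of `G` whose unique exposed vertex is `v`. -/
def IsNearPerfectMatchingSet (G : SimpleGraph V) (M : Set (Sym2 V)) (v : V) : Prop :=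
  IsMatchingSet G M ∧ (∀ e ∈ M, v ∉ e) ∧ ∀ u : V, u ≠ v → ∃ e ∈ M, u ∈ e

/-- The induced subgraph `G[X]` has a perfect matching. -/
def HasPMOn (G : SimpleGraph V) (X : Set V) : Prop :=
  ∃ M : Set (Sym2 V), IsMatchingSet G M ∧ (∀ e ∈ M, ∀ x : V, x ∈ e → x ∈ X) ∧
    ∀ v ∈ X, ∃ e ∈ M, v ∈ e

/-- `G` is factorizable: it has a perfect matching. -/
def Factorizable (G : SimpleGraph V) : Prop :=
  ∃ M : Set (Sym2 V), IsPerfectMatchingSet G M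

/-- `G` is factor-critical: deleting any single vertex leaves a factorizable graph. -/
def FactorCritical (G : SimpleGraph V) : Prop :=
  ∀ v : V, HasPMOn G {v}ᶜ

/-- A walk is `M`-alternating: its edges outside `M` are pairwise vertex-disjoint. -/
def MAlternating (M : Set (Sym2 V)) {G : SimpleGraph V} {u v : V} (p : G.Walk u v) : Prop :=
  ∀ e ∈ p.edges, ∀ f ∈ p.edges, e ∉ M → f ∉ M → e ≠ f → ∀ x : V, x ∈ e → x ∉ f

/-- An `M`-saturated path: a path with an odd number of edges such that `M ∩ E(P)`
is a perfect matching of `P`. -/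
def IsSaturatedPath (M : Set (Sym2 V)) {G : SimpleGraph V} {u v : V} (p : G.Walk u v) : Prop :=
  p.IsPath ∧ Odd p.length ∧ ∀ x ∈ p.support, ∃ e ∈ p.edges, e ∈ M ∧ x ∈ e

/-- An `M`-exposed path: a path with an odd number of edges such that `E(P) \ M`
is a perfect matching of `P`. -/
def IsExposedPath (M : Set (Sym2 V)) {G : SimpleGraph V} {u v : V} (p : G.Walk u v) : Prop :=
  p.IsPath ∧ Odd p.length ∧ ∀ x ∈ p.support, ∃ e ∈ p.edges, e ∉ M ∧ x ∈ e

/-- An `M`-balanced path from `u` to `v`: an `M`-alternating path with an even number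
of edges whose first edge (the one incident with `u`) belongs to `M`; a trivial
one-vertex path is `M`-balanced. -/
def IsBalancedPath (M : Set (Sym2 V)) {G : SimpleGraph V} {u v : V} (p : G.Walk u v) : Prop :=
  p.IsPath ∧ Even p.length ∧ MAlternating M p ∧ ∀ e ∈ p.edges.head?, e ∈ M

/-- An edge of `G` is allowed if it lies in some perfect matching of `G`. -/
def Allowed (G : SimpleGraph V) (e : Sym2 V) : Prop :=
  ∃ M : Set (Sym2 V), IsPerfectMatchingSet G M ∧ e ∈ M

/-- The spanning subgraph of `G` formed by its allowed edges. -/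
def allowedSubgraph (G : SimpleGraph V) : SimpleGraph V where
  Adj u v := G.Adj u v ∧ Allowed G s(u, v)
  symm := by
    refine ⟨?_⟩
    intro u v h
    refine ⟨h.1.symm, ?_⟩
    rw [Sym2.eq_swap]
    exact h.2
  loopless := ⟨fun v h => G.irrefl h.1⟩

/-- `C` is (the vertex set of) a factor-component of `G`: a connected component of the
spanning subgraph of `G` formed by the allowed edges (the factor-component itself being
the induced subgraph `G[C]`). -/
def IsFactorComponent (G : SimpleGraph V) (C : Set V) : Prop :=
  ∃ c : (allowedSubgraph G).ConnectedComponent, C = c.supp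

/-- `G` is elementary: it is factorizable and has exactly one factor-component. -/
def Elementary (G : SimpleGraph V) : Prop :=
  Factorizable G ∧ (allowedSubgraph G).Connected

/-- `X` is a separating set of `G`. -/
def Separating (G : SimpleGraph V) (X : Set V) : Prop :=
  ∀ C : Set V, IsFactorComponent G C → C ⊆ X ∨ Disjoint C X

/-- The contraction `G[X]/S`: the induced subgraph of `G` on `X` with `S` contracted
to a single vertex (the vertex `none`), deleting loops and parallel edges. -/
def contractOn (G : SimpleGraph V) (X S : Set V) : SimpleGraph (Option ↥(X \ S)) where
  Adj a b :=
    match a, b with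
    | some x, some y => G.Adj x.1 y.1
    | some x, none => ∃ s ∈ S, G.Adj x.1 s
    | none, some y => ∃ s ∈ S, G.Adj y.1 s
    | none, none => False
  symm := by
    refine ⟨?_⟩
    rintro (_ | x) (_ | y) h
    · exact h.elim
    · exact h
    · exact h
    · exact h.symm
  loopless := by
    refine ⟨?_⟩
    rintro (_ | x) h
    · exact h.elim
    · exact G.irrefl h

/-- `X` is a critical-inducing set for the factor-component (with vertex set) `C1`:
a separating set containing `C1` such that `G[X]/C1` is factor-critical. -/
def CriticalInducing (G : SimpleGraph V) (C1 X : Set V) : Prop :=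
  Separating G X ∧ C1 ⊆ X ∧ FactorCritical (contractOn G X C1)

/-- `C1 ⊵ C2`: there is a critical-inducing set for `C1` to `C2`. -/
def Yield (G : SimpleGraph V) (C1 C2 : Set V) : Prop :=
  ∃ X : Set V, CriticalInducing G C1 X ∧ C2 ⊆ X

/-- `u ∼ v`: `u = v` or `G - u - v` has no perfect matching. -/
def SimRel (G : SimpleGraph V) (u v : V) : Prop :=
  u = v ∨ ¬ HasPMOn G (({u, v} : Set V)ᶜ)

/-- An `M`-ear relative to the vertex set `X`: a path whose two end vertices lie in `X`
and whose internal vertices do not (or a cycle with exactly one vertex in `X`), such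
that the ear minus `X` is an `M`-saturated path. -/
def IsMEar (G : SimpleGraph V) (M : Set (Sym2 V)) (X : Set V) {u v : V}
    (p : G.Walk u v) : Prop :=
  u ∈ X ∧ v ∈ X ∧ ((∃ h : u = v, (p.copy rfl h.symm).IsCycle) ∨ (u ≠ v ∧ p.IsPath)) ∧
  ∃ (x y : V) (hux : G.Adj u x) (q : G.Walk x y) (hyv : G.Adj y v),
    p = SimpleGraph.Walk.cons hux (q.concat hyv) ∧
    IsSaturatedPath M q ∧ ∀ w ∈ q.support, w ∉ X

/-- An `M`-ear relative to `X` through (the factor-component with vertex set) `C`: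
some internal vertex of the ear lies in `C`. -/
def IsMEarThrough (G : SimpleGraph V) (M : Set (Sym2 V)) (X C : Set V) {u v : V}
    (p : G.Walk u v) : Prop :=
  IsMEar G M X p ∧ ∃ w ∈ p.support, w ∉ X ∧ w ∈ C

/-- An `M`-ear sequence `(H 0, …, H k)` of pairwise distinct factor-components,
where for each `i` there is an `M`-ear relative to `H i` through `H (i+1)`. -/
def IsMEarSequence (G : SimpleGraph V) (M : Set (Sym2 V)) (k : ℕ)
    (H : Fin (k + 1) → Set V) : Prop :=
  (∀ i, IsFactorComponent G (H i)) ∧ Function.Injective H ∧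
  ∀ i : Fin k, ∃ (u v : V) (p : G.Walk u v),
    IsMEarThrough G M (H i.castSucc) (H i.succ) p

/-- A subgraph `H` of `G` is factor-critical: for every `v ∈ V(H)`, `H - v` has a
perfect matching. -/
def SubgraphFactorCritical (G : SimpleGraph V) (H : G.Subgraph) : Prop :=
  ∀ v ∈ H.verts, ∃ N : Set (Sym2 V), N ⊆ H.edgeSet ∧ DisjointEdges N ∧
    (∀ e ∈ N, v ∉ e) ∧ ∀ u ∈ H.verts, u ≠ v → ∃ e ∈ N, u ∈ e

/-! Let `x ∉ V(G')`, let `M` be a perfect matching of `G - x` and `M₀` one of `G - V(G')`.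
Let `y` be the `M₀`-partner of `x` and `z` the `M`-partner of `y`. If `z ∈ V(G')`, exchanging
`xy` for `yz` in `M₀` gives a matching covering `V(G')ᶜ \ {x}` and the single vertex `z` of `G'`;
otherwise recurse on `V(G')ᶜ \ {x, y}` from `z`, i.e. follow the `M₀`–`M` alternating path
out of `x` until it enters `G'`. A matching meeting `V(G')` only once is mapped injectively by
the contraction, here onto a perfect matching of `G/G' - x`; the vertex `G'` of `G/G'` is
handled by `M₀` itself. -/

def coveredVerts (M : Set (Sym2 V)) : Set V :=
  {v | ∃ e ∈ M, v ∈ e}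

section Matching

variable {G : SimpleGraph V} {M : Set (Sym2 V)}

theorem hasPMOn_iff {X : Set V} :
    HasPMOn G X ↔ ∃ M, IsMatchingSet G M ∧ coveredVerts M = X := by
  constructor
  · rintro ⟨M, hM, hMX, hXM⟩
    exact ⟨M, hM, Set.Subset.antisymm (fun v ⟨e, he, hv⟩ => hMX e he v hv) hXM⟩
  · rintro ⟨M, hM, rfl⟩
    exact ⟨M, hM, fun e he v hv => ⟨e, he, hv⟩, fun v hv => hv⟩

theorem coveredVerts_insert (a b : V) (M : Set (Sym2 V)) :
    coveredVerts (insert s(a, b) M) = insert a (insert b (coveredVerts M)) := by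
  ext v
  simp [coveredVerts, or_assoc]

theorem coveredVerts_sdiff_singleton (hM : DisjointEdges M) {a b : V} (hab : s(a, b) ∈ M) :
    coveredVerts (M \ {s(a, b)}) = coveredVerts M \ {a, b} := by
  ext v
  simp only [coveredVerts, Set.mem_sdiff, Set.mem_singleton_iff, Set.mem_ofPred_eq,
    Set.mem_insert_iff]
  constructor
  · rintro ⟨e, ⟨he, hne⟩, hv⟩
    refine ⟨⟨e, he, hv⟩, ?_⟩
    rintro (rfl | rfl)
    · exact hM e he _ hab hne v hv (Sym2.mem_mk_left v b)
    · exact hM e he _ hab hne v hv (Sym2.mem_mk_right a v)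
  · rintro ⟨⟨e, he, hv⟩, hvab⟩
    refine ⟨e, ⟨he, ?_⟩, hv⟩
    rintro rfl
    exact hvab (Sym2.mem_iff.mp hv)

theorem IsMatchingSet.mono {N : Set (Sym2 V)} (hM : IsMatchingSet G M) (hNM : N ⊆ M) :
    IsMatchingSet G N :=
  ⟨hNM.trans hM.1, fun e he f hf => hM.2 e (hNM he) f (hNM hf)⟩

theorem IsMatchingSet.insert (hM : IsMatchingSet G M) {a b : V} (hab : G.Adj a b)
    (ha : a ∉ coveredVerts M) (hb : b ∉ coveredVerts M) :
    IsMatchingSet G (insert s(a, b) M) := by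
  have fresh : ∀ e ∈ M, ∀ v ∈ s(a, b), v ∉ e := by
    rintro e he v hv hve
    rcases Sym2.mem_iff.mp hv with rfl | rfl
    exacts [ha ⟨e, he, hve⟩, hb ⟨e, he, hve⟩]
  refine ⟨Set.insert_subset hab hM.1, ?_⟩
  rintro e (rfl | he) f (rfl | hf) hne v hve hvf
  · exact hne rfl
  · exact fresh f hf v hve hvf
  · exact fresh e he v hvf hve
  · exact hM.2 e he f hf hne v hve hvf

theorem IsMatchingSet.exists_mem_of_mem_coveredVerts (hM : IsMatchingSet G M) {v : V}
    (hv : v ∈ coveredVerts M) : ∃ w, s(v, w) ∈ M ∧ G.Adj v w := by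
  obtain ⟨e, he, hve⟩ := hv
  obtain ⟨w, rfl⟩ := Sym2.mem_iff_exists.mp hve
  exact ⟨w, he, hM.1 he⟩

theorem coveredVerts_image {W : Type*} (f : V → W) (M : Set (Sym2 V)) :
    coveredVerts (Sym2.map f '' M) = f '' coveredVerts M := by
  ext w
  simp only [coveredVerts, Set.mem_image, Set.mem_ofPred_eq]
  constructor
  · rintro ⟨_, ⟨e, he, rfl⟩, hw⟩
    obtain ⟨a, ha, rfl⟩ := Sym2.mem_map.mp hw
    exact ⟨a, ⟨e, he, ha⟩, rfl⟩
  · rintro ⟨a, ⟨e, he, ha⟩, rfl⟩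
    exact ⟨_, ⟨e, he, rfl⟩, Sym2.mem_map.mpr ⟨a, ha, rfl⟩⟩

theorem IsMatchingSet.image {W : Type*} {H : SimpleGraph W} (hM : IsMatchingSet G M)
    (f : V → W) (hf : Set.InjOn f (coveredVerts M))
    (hadj : ∀ a b, s(a, b) ∈ M → H.Adj (f a) (f b)) :
    IsMatchingSet H (Sym2.map f '' M) := by
  constructor
  · rintro _ ⟨e, he, rfl⟩
    induction e using Sym2.ind with
    | _ a b => exact hadj a b he
  · rintro _ ⟨e, he, rfl⟩ _ ⟨e', he', rfl⟩ hne w hw hw'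
    obtain ⟨a, ha, rfl⟩ := Sym2.mem_map.mp hw
    obtain ⟨a', ha', haa'⟩ := Sym2.mem_map.mp hw'
    rw [hf ⟨e', he', ha'⟩ ⟨e, he, ha⟩ haa'] at ha'
    exact hM.2 e he e' he' (fun h => hne (h ▸ rfl)) a ha ha'

/-- Recording that the exit vertex `z` is covered by `M` keeps it away from `x` and `y`
in the recursion. -/
theorem exists_matching_coveredVerts_eq_insert {W : Set V} (hW : W.Finite) (hPM : HasPMOn G W)
    (hM : IsMatchingSet G M) {x : V} (hx : x ∈ W) (hxM : x ∉ coveredVerts M)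
    (hWM : W \ {x} ⊆ coveredVerts M) :
    ∃ N z, IsMatchingSet G N ∧ z ∈ coveredVerts M \ W ∧
      coveredVerts N = insert z (W \ {x}) := by
  induction hcard : W.ncard using Nat.strong_induction_on generalizing W M x with
  | _ n ih =>
  obtain ⟨M₀, hM₀, hM₀W⟩ := hasPMOn_iff.mp hPM
  obtain ⟨y, hxy, hGxy⟩ := hM₀.exists_mem_of_mem_coveredVerts (hM₀W ▸ hx)
  have hyW : y ∈ W := hM₀W ▸ ⟨_, hxy, Sym2.mem_mk_right x y⟩
  have hyx : y ≠ x := hGxy.ne.symm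
  obtain ⟨z, hyz, hGyz⟩ := hM.exists_mem_of_mem_coveredVerts (hWM ⟨hyW, hyx⟩)
  have hzM : z ∈ coveredVerts M := ⟨_, hyz, Sym2.mem_mk_right y z⟩
  have hzx : z ≠ x := fun h => hxM (h ▸ hzM)
  have hzy : z ≠ y := hGyz.ne.symm
  have hM₀' : coveredVerts (M₀ \ {s(x, y)}) = W \ {x, y} :=
    hM₀W ▸ coveredVerts_sdiff_singleton hM₀.2 hxy
  have hM' : coveredVerts (M \ {s(y, z)}) = coveredVerts M \ {y, z} :=
    coveredVerts_sdiff_singleton hM.2 hyz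
  by_cases hzW : z ∈ W
  · have hlt : (W \ {x, y}).ncard < n :=
      hcard ▸ Set.ncard_lt_ncard (Set.sdiff_ssubset_left_iff.mpr ⟨x, hx, by simp⟩) hW
    have hzW' : z ∈ W \ {x, y} := by simp [hzW, hzx, hzy]
    have hzM' : z ∉ coveredVerts (M \ {s(y, z)}) := by simp [hM']
    have hWM' : (W \ {x, y}) \ {z} ⊆ coveredVerts (M \ {s(y, z)}) := by
      intro v hv
      rw [hM']
      simp only [Set.mem_insert_iff, Set.mem_sdiff, Set.mem_singleton_iff, not_or] at hv ⊢
      tauto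
    obtain ⟨N, z', hN, ⟨hz'M, hz'W⟩, hNcov⟩ := ih _ hlt hW.sdiff
      (hasPMOn_iff.mpr ⟨_, hM₀.mono Set.sdiff_subset, hM₀'⟩) (hM.mono Set.sdiff_subset)
      hzW' hzM' hWM' rfl
    rw [hM'] at hz'M
    have hz'x : z' ≠ x := fun h => hxM (h ▸ hz'M.1)
    simp only [Set.mem_sdiff, Set.mem_insert_iff, Set.mem_singleton_iff, not_or] at hz'M hz'W
    refine ⟨insert s(y, z) N, z', hN.insert hGyz ?_ ?_, ⟨hz'M.1, fun h => ?_⟩, ?_⟩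
    · rw [hNcov]; simp only [Set.mem_insert_iff, Set.mem_sdiff, Set.mem_singleton_iff, not_or]; tauto
    · rw [hNcov]; simp only [Set.mem_insert_iff, Set.mem_sdiff, Set.mem_singleton_iff, not_or]; tauto
    · exact hz'W ⟨h, hz'x, hz'M.2.1⟩
    · rw [coveredVerts_insert, hNcov]
      ext v
      simp only [Set.mem_insert_iff, Set.mem_sdiff, Set.mem_singleton_iff, not_or]
      grind
  · refine ⟨insert s(y, z) (M₀ \ {s(x, y)}), z, (hM₀.mono Set.sdiff_subset).insert hGyz
      (by simp [hM₀']) (by simp [hM₀', hzW]), ⟨hzM, hzW⟩, ?_⟩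
    rw [coveredVerts_insert, hM₀']
    ext v
    simp only [Set.mem_insert_iff, Set.mem_sdiff, Set.mem_singleton_iff, not_or]
    grind

end Matching

section Contraction

variable {G : SimpleGraph V} {X S : Set V}

open Classical in
noncomputable def contractProj (X S : Set V) (a : V) : Option ↥(X \ S) :=
  if h : a ∈ X \ S then some ⟨a, h⟩ else none

theorem contractProj_of_mem_sdiff {a : V} (h : a ∈ X \ S) : contractProj X S a = some ⟨a, h⟩ :=
  dif_pos h

theorem contractProj_of_mem {a : V} (h : a ∈ S) : contractProj X S a = none :=
  dif_neg fun h' => h'.2 h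

theorem contractOn_adj_contractProj {a b : V} (hab : G.Adj a b) (ha : a ∈ X) (hb : b ∈ X)
    (hS : ¬(a ∈ S ∧ b ∈ S)) :
    (contractOn G X S).Adj (contractProj X S a) (contractProj X S b) := by
  by_cases haS : a ∈ S <;> by_cases hbS : b ∈ S
  · exact absurd ⟨haS, hbS⟩ hS
  · rw [contractProj_of_mem haS, contractProj_of_mem_sdiff ⟨hb, hbS⟩]
    exact ⟨a, haS, hab.symm⟩
  · rw [contractProj_of_mem_sdiff ⟨ha, haS⟩, contractProj_of_mem hbS]
    exact ⟨b, hbS, hab⟩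
  · rw [contractProj_of_mem_sdiff ⟨ha, haS⟩, contractProj_of_mem_sdiff ⟨hb, hbS⟩]
    exact hab

theorem contractProj_injOn {T : Set V} (hTX : T ⊆ X) (hTS : (T ∩ S).Subsingleton) :
    Set.InjOn (contractProj X S) T := by
  intro a ha b hb hab
  by_cases haS : a ∈ S <;> by_cases hbS : b ∈ S
  · exact hTS ⟨ha, haS⟩ ⟨hb, hbS⟩
  · rw [contractProj_of_mem haS, contractProj_of_mem_sdiff ⟨hTX hb, hbS⟩] at hab
    exact (Option.some_ne_none _ hab.symm).elim
  · rw [contractProj_of_mem_sdiff ⟨hTX ha, haS⟩, contractProj_of_mem hbS] at hab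
    exact (Option.some_ne_none _ hab).elim
  · rw [contractProj_of_mem_sdiff ⟨hTX ha, haS⟩, contractProj_of_mem_sdiff ⟨hTX hb, hbS⟩] at hab
    exact congrArg Subtype.val (Option.some_injective _ hab)

theorem hasPMOn_contractOn_image {N : Set (Sym2 V)} (hN : IsMatchingSet G N)
    (hNX : coveredVerts N ⊆ X) (hNS : (coveredVerts N ∩ S).Subsingleton) :
    HasPMOn (contractOn G X S) (contractProj X S '' coveredVerts N) := by
  refine hasPMOn_iff.mpr ⟨_, hN.image _ (contractProj_injOn hNX hNS) ?_, coveredVerts_image _ _⟩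
  intro a b hab
  have ha : a ∈ coveredVerts N := ⟨_, hab, Sym2.mem_mk_left a b⟩
  have hb : b ∈ coveredVerts N := ⟨_, hab, Sym2.mem_mk_right a b⟩
  have hGab : G.Adj a b := hN.1 hab
  exact contractOn_adj_contractProj hGab (hNX ha) (hNX hb)
    fun h => hGab.ne (hNS ⟨ha, h.1⟩ ⟨hb, h.2⟩)

theorem contractProj_image_sdiff : contractProj X S '' (X \ S) = {none}ᶜ := by
  ext (_ | a)
  · refine iff_of_false ?_ (not_not.mpr rfl)
    rintro ⟨b, hb, h⟩
    rw [contractProj_of_mem_sdiff hb] at h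
    exact Option.some_ne_none _ h
  · exact iff_of_true ⟨a, a.2, contractProj_of_mem_sdiff a.2⟩ (Option.some_ne_none a)

theorem contractProj_image_insert_sdiff {z : V} (hz : z ∈ S) (x : ↥(X \ S)) :
    contractProj X S '' insert z ((X \ S) \ {x.1}) = {some x}ᶜ := by
  ext (_ | a)
  · exact iff_of_true ⟨z, Set.mem_insert z _, contractProj_of_mem hz⟩ (Option.some_ne_none x).symm
  · rw [Set.mem_compl_singleton_iff, ne_eq, Option.some.injEq]
    constructor
    · rintro ⟨b, rfl | ⟨hb, hbx⟩, h⟩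
      · rw [contractProj_of_mem hz] at h
        exact (Option.some_ne_none _ h.symm).elim
      · rw [contractProj_of_mem_sdiff hb, Option.some.injEq] at h
        exact fun hax => hbx (congrArg Subtype.val (h.trans hax))
    · intro hax
      exact ⟨a, Or.inr ⟨a.2, fun h => hax (Subtype.ext h)⟩, contractProj_of_mem_sdiff a.2⟩

end Contraction

theorem statement_2_general {V : Type*} [Fintype V] (G : SimpleGraph V) (hG : FactorCritical G)
    (G' : G.Subgraph) (hnice : HasPMOn G G'.vertsᶜ) :
    FactorCritical (contractOn G Set.univ G'.verts) := by
  rintro (_ | x)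
  · obtain ⟨M₀, hM₀, hcov⟩ := hasPMOn_iff.mp hnice
    have hS : (coveredVerts M₀ ∩ G'.verts).Subsingleton := by
      simp [hcov, Set.compl_inter_self]
    have h := hasPMOn_contractOn_image hM₀ (Set.subset_univ _) hS
    rwa [hcov, Set.compl_eq_univ_sdiff, contractProj_image_sdiff] at h
  · obtain ⟨M, hM, hcov⟩ := hasPMOn_iff.mp (hG x)
    obtain ⟨N, z, hN, ⟨-, hzS⟩, hNcov⟩ := exists_matching_coveredVerts_eq_insert
      (Set.toFinite _) hnice hM x.2.2 (by simp [hcov]) (by simp [hcov])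
    have hS : (coveredVerts N ∩ G'.verts).Subsingleton :=
      Set.subsingleton_singleton.anti fun v ⟨hv, hvS⟩ => by
        rw [hNcov] at hv
        exact hv.resolve_right fun h => h.1 hvS
    have h := hasPMOn_contractOn_image hN (Set.subset_univ _) hS
    rwa [hNcov, Set.compl_eq_univ_sdiff, contractProj_image_insert_sdiff (not_not.mp hzS)] at h

/-- Let `G` be a factor-critical finite simple graph and `G'` a nice
factor-critical subgraph of `G` (`G'` is factor-critical and `G − V(G')` has a perfect
matching). Then the contraction `G/G'` (identify all vertices of `G'` to a single vertex,
deleting loops and parallel edges) is factor-critical. -/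
theorem statement_2 {V : Type*} [Fintype V] (G : SimpleGraph V) (hG : FactorCritical G)
    (G' : G.Subgraph) (hfc : SubgraphFactorCritical G G')
    (hnice : HasPMOn G G'.vertsᶜ) :
    FactorCritical (contractOn G Set.univ G'.verts) :=
  statement_2_general G hG G' hnice
end

section
/- Let G be an elementary finite simple graph and M a perfect matching of G. Then for any two vertices u, v ∈ V(G), there is an M-saturated path between u and v, or there is an M-balanced path from u to v. -/
/-!
Call a path *good* if it is `M`-alternating and starts (at `u`) with an edge of `M`; a good
path is `M`-balanced if its length is even and `M`-saturated if it is odd. So it suffices to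
find a good path from `u` to every vertex, and since `G` is elementary it suffices to show that
a good path to `x` yields one to `y` whenever `xy` is an allowed edge. If `y` lies on the path,
or `xy ∈ M`, this is immediate. Otherwise `xy` lies in a perfect matching `M'`, and the
alternating cycle of `M ∆ M'` through `xy` gives a path `P` from `y` to `x` that starts and ends
with `M`-edges. The good path meets `P` first at some vertex `z`, and then its part up to `z`
has even length, so it continues along `P` either back to `y` or on to `x` followed by `xy`,
depending on the parity of the position of `z` on `P`.
-/

open SimpleGraph

variable {V : Type*}

namespace SimpleGraph.Walk

variable {G : SimpleGraph V} {P Q : Sym2 V → Prop} {u v w x : V} {e f : Sym2 V}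

def Alternates (P Q : Sym2 V → Prop) : ∀ {u v : V}, G.Walk u v → Prop
  | _, _, nil => True
  | _, _, cons (u := a) (v := b) _ p => P s(a, b) ∧ p.Alternates Q P

@[simp] lemma alternates_nil : (nil : G.Walk u u).Alternates P Q := trivial

@[simp] lemma alternates_cons (h : G.Adj u v) (p : G.Walk v w) :
    (cons h p).Alternates P Q ↔ P s(u, v) ∧ p.Alternates Q P := Iff.rfl

lemma alternates_append {p : G.Walk u v} {q : G.Walk v w} :
    (p.append q).Alternates P Q ↔
      p.Alternates P Q ∧ if Even p.length then q.Alternates P Q else q.Alternates Q P := by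
  induction p generalizing P Q with
  | nil => simp
  | cons h p ih =>
    simp only [cons_append, alternates_cons, ih, length_cons, Nat.even_add_one]
    split_ifs <;> tauto

lemma alternates_concat {p : G.Walk u v} (h : G.Adj v w) :
    (p.concat h).Alternates P Q ↔
      p.Alternates P Q ∧ if Even p.length then P s(v, w) else Q s(v, w) := by
  rw [concat_eq_append, alternates_append]
  split_ifs <;> simp

lemma Alternates.mono {P' Q' : Sym2 V → Prop} {p : G.Walk u v} (ha : p.Alternates P Q)
    (hP : ∀ e, P e → P' e) (hQ : ∀ e, Q e → Q' e) : p.Alternates P' Q' := by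
  induction p generalizing P Q P' Q' with
  | nil => trivial
  | cons _ _ ih => exact ⟨hP _ ha.1, ih ha.2 hQ hP⟩

lemma Alternates.reverse {p : G.Walk u v} (ha : p.Alternates P Q) :
    if Even p.length then p.reverse.Alternates Q P else p.reverse.Alternates P Q := by
  induction p generalizing P Q with
  | nil => simp
  | cons h p ih =>
    have hp := ih ha.2
    simp only [reverse_cons, length_cons, Nat.even_add_one]
    split_ifs at hp ⊢ <;> simp_all [alternates_append, Sym2.eq_swap]

lemma Alternates.of_mem_edges_of_start_mem {p : G.Walk u v} (ha : p.Alternates P Q)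
    (hp : p.IsPath) (he : e ∈ p.edges) (hue : u ∈ e) : P e := by
  cases p with
  | nil => simp at he
  | cons h p =>
    rw [edges_cons, List.mem_cons] at he
    rcases he with rfl | he
    · exact ha.1
    · obtain ⟨w, rfl⟩ := Sym2.mem_iff_exists.mp hue
      exact absurd (p.fst_mem_support_of_mem_edges he) ((cons_isPath_iff _ _).1 hp).2

lemma Alternates.of_mem_edges_of_end_mem {p : G.Walk u v} (ha : p.Alternates P Q)
    (hp : p.IsPath) (he : e ∈ p.edges) (hve : v ∈ e) : if Even p.length then Q e else P e := by
  have hre : e ∈ p.reverse.edges := by simpa using he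
  have hr := ha.reverse
  split_ifs at hr ⊢ <;> exact hr.of_mem_edges_of_start_mem hp.reverse hre hve

lemma Alternates.exists_mem_edges :
    ∀ {u v : V} {p : G.Walk u v}, p.Alternates P Q → x ∈ p.support →
      (∃ e ∈ p.edges, P e ∧ x ∈ e) ∨ (x = v ∧ Even p.length)
  | _, _, nil, _, hx => .inr ⟨by simpa using hx, by simp⟩
  | _, _, cons h nil, ha, hx => .inl ⟨_, by simp, ha.1, by simpa [Sym2.mem_iff] using hx⟩
  | _, _, cons h (cons h' p), ha, hx => by
    simp only [support_cons, List.mem_cons] at hx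
    rcases hx with rfl | rfl | hx
    · exact .inl ⟨_, by simp, ha.1, Sym2.mem_mk_left _ _⟩
    · exact .inl ⟨_, by simp, ha.1, Sym2.mem_mk_right _ _⟩
    · rcases ha.2.2.exists_mem_edges hx with ⟨e, he, hPe, hxe⟩ | ⟨rfl, hev⟩
      · exact .inl ⟨e, by simp [he], hPe, hxe⟩
      · exact .inr ⟨rfl, by simpa [Nat.even_add_one] using hev⟩

lemma Alternates.exists_mem_edges_of_ne_start {p : G.Walk u v} (ha : p.Alternates P Q)
    (hx : x ∈ p.support) (hxu : x ≠ u) :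
    (∃ e ∈ p.edges, Q e ∧ x ∈ e) ∨ (x = v ∧ Odd p.length) := by
  cases p with
  | nil => exact absurd (by simpa using hx) hxu
  | cons h p =>
    rw [support_cons, List.mem_cons] at hx
    rcases ha.2.exists_mem_edges (hx.resolve_left hxu) with ⟨e, he, hQe, hxe⟩ | ⟨rfl, hev⟩
    · exact .inl ⟨e, by simp [he], hQe, hxe⟩
    · exact .inr ⟨rfl, by simpa [Nat.odd_add_one] using hev⟩

lemma IsPath.alternates_of_mem_edges {p : G.Walk u v} (hp : p.IsPath) (ha : p.Alternates P Q)
    (he : e ∈ p.edges) (hf : f ∈ p.edges) (hef : e ≠ f) (hxe : x ∈ e) (hxf : x ∈ f) :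
    P e ∧ Q f ∨ Q e ∧ P f := by
  induction p generalizing P Q with
  | nil => simp at he
  | @cons a b _ h p ih =>
    rw [cons_isPath_iff] at hp
    have hnext : ∀ g ∈ p.edges, x ∈ s(a, b) → x ∈ g → Q g := by
      intro g hg hx hxg
      rcases Sym2.mem_iff.mp hx with rfl | rfl
      · obtain ⟨y, rfl⟩ := Sym2.mem_iff_exists.mp hxg
        exact absurd (p.fst_mem_support_of_mem_edges hg) hp.2
      · exact ha.2.of_mem_edges_of_start_mem hp.1 hg hxg
    rw [edges_cons, List.mem_cons] at he hf
    rcases he with rfl | he <;> rcases hf with rfl | hf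
    · exact absurd rfl hef
    · exact .inl ⟨ha.1, hnext f hf hxe hxf⟩
    · exact .inr ⟨hnext e he hxf hxe, ha.1⟩
    · exact (ih hp.1 ha.2 he hf).symm

lemma IsPath.append {p : G.Walk u v} {q : G.Walk v w} (hp : p.IsPath) (hq : q.IsPath)
    (hpq : ∀ x ∈ p.support, x ∈ q.support → x = v) : (p.append q).IsPath := by
  induction p with
  | nil => simpa
  | cons h p ih =>
    rw [cons_isPath_iff] at hp
    rw [cons_append, cons_isPath_iff, mem_support_append_iff]
    refine ⟨ih hp.1 hq fun x hx => hpq x (by simp [hx]), ?_⟩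
    rintro (hu | hu)
    · exact hp.2 hu
    · exact hp.2 (hpq _ (by simp) hu ▸ p.end_mem_support)

lemma exists_eq_append_of_exists_mem_support {T : Set V} (p : G.Walk u v)
    (h : ∃ x ∈ p.support, x ∈ T) :
    ∃ z ∈ T, ∃ (q : G.Walk u z) (r : G.Walk z v), p = q.append r ∧
      ∀ x ∈ q.support, x ∈ T → x = z := by
  induction p with
  | nil =>
    obtain ⟨x, hx, hxT⟩ := h
    rw [support_nil, List.mem_singleton] at hx
    subst hx
    exact ⟨_, hxT, nil, nil, rfl, by simp⟩
  | @cons a b _ hab p ih =>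
    by_cases ha : a ∈ T
    · exact ⟨a, ha, nil, cons hab p, rfl, by simp⟩
    · obtain ⟨x, hx, hxT⟩ := h
      rw [support_cons, List.mem_cons] at hx
      obtain ⟨z, hz, q, r, rfl, hq⟩ :=
        ih ⟨x, hx.resolve_left (by rintro rfl; exact ha hxT), hxT⟩
      refine ⟨z, hz, cons hab q, r, rfl, fun x hx hxT => ?_⟩
      rw [support_cons, List.mem_cons] at hx
      rcases hx with rfl | hx
      · exact absurd hxT ha
      · exact hq x hx hxT

end SimpleGraph.Walk

section

open Walk

variable {G : SimpleGraph V} {M M' : Set (Sym2 V)} {u v x y : V} {e f : Sym2 V}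

lemma DisjointEdges.eq_of_mem {N : Set (Sym2 V)} (hN : DisjointEdges N) (he : e ∈ N)
    (hf : f ∈ N) (hxe : x ∈ e) (hxf : x ∈ f) : e = f := by
  by_contra hef
  exact hN e he f hf hef x hxe hxf

lemma IsPerfectMatchingSet.exists_adj (hM : IsPerfectMatchingSet G M) (v : V) :
    ∃ w, G.Adj v w ∧ s(v, w) ∈ M := by
  obtain ⟨e, heM, hve⟩ := hM.2 v
  obtain ⟨w, rfl⟩ := Sym2.mem_iff_exists.mp hve
  exact ⟨w, G.mem_edgeSet.mp (hM.1.1 heM), heM⟩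

/-- Prolonging `p` along `M ∆ M'` never gets stuck, and it can only close up at `x`, the
`M'`-partner of `y`. -/
lemma exists_alternating_path_of_alternates_sdiff [Fintype V] (hM : IsPerfectMatchingSet G M)
    (hM' : IsPerfectMatchingSet G M') (hxy' : s(x, y) ∈ M') (hxy : s(x, y) ∉ M) {t : V}
    (p : G.Walk y t) (hp : p.IsPath) (ha : p.Alternates (· ∈ M \ M') (· ∈ M' \ M)) :
    ∃ q : G.Walk y x, q.IsPath ∧ q.Alternates (· ∈ M) (· ∉ M) ∧ Odd q.length := by
  rcases Nat.even_or_odd p.length with hev | hodd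
  · obtain ⟨t', htt', htt'M⟩ := hM.exists_adj t
    obtain ⟨f, hf, htf⟩ : ∃ f ∈ M' \ M, t ∈ f := by
      by_cases hty : t = y
      · exact ⟨_, ⟨hxy', hxy⟩, hty ▸ Sym2.mem_mk_right _ _⟩
      · rcases ha.exists_mem_edges_of_ne_start p.end_mem_support hty with ⟨f, -, hf⟩ | ⟨-, hodd⟩
        · exact ⟨f, hf⟩
        · exact absurd hev (Nat.not_even_iff_odd.2 hodd)
    have htt'M' : s(t, t') ∉ M' := fun h =>
      hf.2 (hM'.1.2.eq_of_mem h hf.1 (Sym2.mem_mk_left _ _) htf ▸ htt'M)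
    have ht' : t' ∉ p.support := by
      intro ht'p
      rcases ha.exists_mem_edges ht'p with ⟨e, he, heM, ht'e⟩ | ⟨rfl, -⟩
      · obtain rfl := hM.1.2.eq_of_mem heM.1 htt'M ht'e (Sym2.mem_mk_right _ _)
        have := ha.of_mem_edges_of_end_mem hp he (Sym2.mem_mk_left _ _)
        simp only [hev, if_true] at this
        exact this.2 heM.1
      · exact htt'.ne rfl
    have hp' := hp.concat ht' htt'
    exact exists_alternating_path_of_alternates_sdiff hM hM' hxy' hxy (p.concat htt') hp'
      ((alternates_concat htt').2 ⟨ha, by simpa [hev] using ⟨htt'M, htt'M'⟩⟩)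
  · by_cases htx : t = x
    · subst htx
      exact ⟨p, hp, ha.mono (fun _ h => h.1) (fun _ h => h.2), hodd⟩
    obtain ⟨t', htt', htt'M'⟩ := hM'.exists_adj t
    obtain ⟨f, hf, htf⟩ : ∃ f ∈ M \ M', t ∈ f := by
      rcases ha.exists_mem_edges p.end_mem_support with ⟨f, -, hf⟩ | ⟨-, hev⟩
      · exact ⟨f, hf⟩
      · exact absurd hev (Nat.not_even_iff_odd.2 hodd)
    have htt'M : s(t, t') ∉ M := fun h =>
      hf.2 (hM.1.2.eq_of_mem h hf.1 (Sym2.mem_mk_left _ _) htf ▸ htt'M')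
    have ht' : t' ∉ p.support := by
      intro ht'p
      by_cases ht'y : t' = y
      · subst ht'y
        exact htx (Sym2.congr_left.1
          (hM'.1.2.eq_of_mem htt'M' hxy' (Sym2.mem_mk_right _ _) (Sym2.mem_mk_right _ _)))
      rcases ha.exists_mem_edges_of_ne_start ht'p ht'y with ⟨e, he, heM', ht'e⟩ | ⟨rfl, -⟩
      · obtain rfl := hM'.1.2.eq_of_mem heM'.1 htt'M' ht'e (Sym2.mem_mk_right _ _)
        have := ha.of_mem_edges_of_end_mem hp he (Sym2.mem_mk_left _ _)
        simp only [Nat.not_even_iff_odd.2 hodd, if_false] at this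
        exact this.2 heM'.1
      · exact htt'.ne rfl
    have hp' := hp.concat ht' htt'
    exact exists_alternating_path_of_alternates_sdiff hM hM' hxy' hxy (p.concat htt') hp'
      ((alternates_concat htt').2
        ⟨ha, by simpa [Nat.not_even_iff_odd.2 hodd] using ⟨htt'M', htt'M⟩⟩)
termination_by Fintype.card V - p.length
decreasing_by all_goals have := hp'.length_lt; rw [length_concat] at this ⊢; omega

lemma exists_alternating_path_of_mem_sdiff [Fintype V] (hM : IsPerfectMatchingSet G M)
    (hM' : IsPerfectMatchingSet G M') (hxy' : s(x, y) ∈ M') (hxy : s(x, y) ∉ M) :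
    ∃ q : G.Walk y x, q.IsPath ∧ q.Alternates (· ∈ M) (· ∉ M) ∧ Odd q.length :=
  exists_alternating_path_of_alternates_sdiff hM hM' hxy' hxy nil IsPath.nil trivial

lemma exists_alternating_path_of_odd_alternating_path (hM : DisjointEdges M)
    {q : G.Walk u x} (hq : q.IsPath) (hqa : q.Alternates (· ∈ M) (· ∉ M))
    {p : G.Walk y x} (hp : p.IsPath) (hpa : p.Alternates (· ∈ M) (· ∉ M)) (hpodd : Odd p.length)
    (hxy : G.Adj x y) (hxyM : s(x, y) ∉ M) (hy : y ∉ q.support) :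
    ∃ r : G.Walk u y, r.IsPath ∧ r.Alternates (· ∈ M) (· ∉ M) := by
  obtain ⟨z, hzp, q₁, q₂, rfl, hq₁p⟩ := q.exists_eq_append_of_exists_mem_support
    (T := {w | w ∈ p.support}) ⟨x, q.end_mem_support, p.end_mem_support⟩
  have hq₁ := hq.of_append_left
  have hq₁a := (alternates_append.1 hqa).1
  -- otherwise the `M`-edge of `q₁` at `z` lies on `p`, so `q₁` meets `p` before `z`
  have hq₁ev : Even q₁.length := by
    by_contra hodd
    obtain ⟨e, he, heM, hze⟩ := (hq₁a.exists_mem_edges q₁.end_mem_support).resolve_right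
      fun h => hodd h.2
    obtain ⟨f, hf, hfM, hzf⟩ := (hpa.exists_mem_edges hzp).resolve_right
      fun h => Nat.not_even_iff_odd.2 hpodd h.2
    obtain rfl := hM.eq_of_mem heM hfM hze hzf
    obtain ⟨w, rfl⟩ := Sym2.mem_iff_exists.mp hze
    obtain rfl := hq₁p w (q₁.snd_mem_support_of_mem_edges he) (p.snd_mem_support_of_mem_edges hf)
    exact G.not_isDiag_of_mem_edgeSet (q₁.edges_subset_edgeSet he) (Sym2.mk_isDiag_iff.2 rfl)
  have hyz : y ≠ z := by
    rintro rfl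
    exact hy (by simp)
  obtain ⟨p₁, p₂, hp₁, hp₂, rfl⟩ := hp.mem_support_iff_exists_append.1 hzp
  obtain ⟨hp₁a, hp₂a⟩ := alternates_append.1 hpa
  rcases Nat.even_or_odd p₁.length with hev | hodd
  · have hy₂ : y ∉ p₂.support := fun h =>
      hp.ne_of_mem_support_of_append hyz p₁.start_mem_support h rfl
    refine ⟨(q₁.append p₂).concat hxy, (hq₁.append hp₂ ?_).concat ?_ hxy, ?_⟩
    · exact fun w hw hw₂ => hq₁p w hw (by simp [mem_support_append_iff, hw₂])
    · rw [mem_support_append_iff]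
      exact fun h => h.elim (fun h => hy (by simp [h])) hy₂
    · simp only [hev, if_true] at hp₂a
      have hp₂odd : Odd p₂.length := by
        simpa [length_append, Nat.odd_add', hev] using hpodd
      rw [alternates_concat, alternates_append, length_append]
      simp [hq₁ev, hq₁a, hp₂a, Nat.even_add, hp₂odd, hxyM]
  · have hp₁r := hp₁a.reverse
    simp only [Nat.not_even_iff_odd.2 hodd, if_false] at hp₁r
    refine ⟨q₁.append p₁.reverse, hq₁.append hp₁.reverse ?_, ?_⟩
    · exact fun w hw hw₁ => hq₁p w hw (by simp_all [mem_support_append_iff])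
    · rw [alternates_append]
      simp [hq₁ev, hq₁a, hp₁r]

lemma exists_alternating_path_of_allowed [Fintype V] (hM : IsPerfectMatchingSet G M)
    {q : G.Walk u x} (hq : q.IsPath) (hqa : q.Alternates (· ∈ M) (· ∉ M)) (hxy : G.Adj x y)
    (hall : Allowed G s(x, y)) : ∃ r : G.Walk u y, r.IsPath ∧ r.Alternates (· ∈ M) (· ∉ M) := by
  by_cases hy : y ∈ q.support
  · obtain ⟨q₁, q₂, hq₁, -, rfl⟩ := hq.mem_support_iff_exists_append.1 hy
    exact ⟨q₁, hq₁, (alternates_append.1 hqa).1⟩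
  by_cases hxyM : s(x, y) ∈ M
  · have hev : Even q.length := by
      refine (hqa.exists_mem_edges q.end_mem_support).elim (fun ⟨e, he, heM, hxe⟩ => ?_) And.right
      obtain rfl := hM.1.2.eq_of_mem heM hxyM hxe (Sym2.mem_mk_left _ _)
      exact absurd (q.snd_mem_support_of_mem_edges he) hy
    exact ⟨q.concat hxy, hq.concat hy hxy, (alternates_concat hxy).2 ⟨hqa, by simpa [hev]⟩⟩
  obtain ⟨M', hM', hxyM'⟩ := hall
  obtain ⟨p, hp, hpa, hpodd⟩ := exists_alternating_path_of_mem_sdiff hM hM' hxyM' hxyM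
  exact exists_alternating_path_of_odd_alternating_path hM.1.2 hq hqa hp hpa hpodd hxy hxyM hy

lemma exists_alternating_path_of_reachable [Fintype V] (hM : IsPerfectMatchingSet G M)
    (h : (allowedSubgraph G).Reachable u v) :
    ∃ p : G.Walk u v, p.IsPath ∧ p.Alternates (· ∈ M) (· ∉ M) := by
  obtain ⟨W⟩ := h.symm
  clear h
  induction W with
  | nil => exact ⟨nil, IsPath.nil, trivial⟩
  | cons hadj _ ih =>
    obtain ⟨q, hq, hqa⟩ := ih
    exact exists_alternating_path_of_allowed hM hq hqa hadj.1.symm (Sym2.eq_swap ▸ hadj.2)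

lemma isSaturatedPath_of_alternates {p : G.Walk u v} (hp : p.IsPath)
    (ha : p.Alternates (· ∈ M) (· ∉ M)) (hodd : Odd p.length) : IsSaturatedPath M p :=
  ⟨hp, hodd, fun _ hx => (ha.exists_mem_edges hx).resolve_right
    fun h => Nat.not_even_iff_odd.2 hodd h.2⟩

lemma isBalancedPath_of_alternates {p : G.Walk u v} (hp : p.IsPath)
    (ha : p.Alternates (· ∈ M) (· ∉ M)) (hev : Even p.length) : IsBalancedPath M p := by
  refine ⟨hp, hev, fun e he f hf heM hfM hef x hxe hxf => ?_, ?_⟩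
  · rcases hp.alternates_of_mem_edges ha he hf hef hxe hxf with ⟨h, -⟩ | ⟨-, h⟩ <;> contradiction
  · cases p with
    | nil => simp
    | cons h p => simpa using ha.1

end

/-- Let `G` be an elementary finite simple graph and `M` a perfect
matching of `G`. Then for any two vertices `u, v` there is an `M`-saturated path between
`u` and `v`, or an `M`-balanced path from `u` to `v`. -/
theorem statement_7 {V : Type*} [Fintype V] (G : SimpleGraph V) (hG : Elementary G)
    (M : Set (Sym2 V)) (hM : IsPerfectMatchingSet G M) (u v : V) :
    (∃ p : G.Walk u v, IsSaturatedPath M p) ∨ (∃ p : G.Walk u v, IsBalancedPath M p) := by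
  obtain ⟨p, hp, ha⟩ := exists_alternating_path_of_reachable hM (hG.2.preconnected u v)
  rcases Nat.even_or_odd p.length with hev | hodd
  · exact .inr ⟨p, isBalancedPath_of_alternates hp ha hev⟩
  · exact .inl ⟨p, isSaturatedPath_of_alternates hp ha hodd⟩
end
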